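/- arXiv:1602.01518 — 5 statements merged into one kernel-verified Lean document; each statement's English description precedes it below -/
import Mathlib

section
/- If (a_α, b_α)_{α<ω₁} is a pre-gap (i.e., for all α < β < ω₁: a_α ∩ b_α = ∅, a_α ⊆* a_β, b_α ⊆* b_β, and a_δ ∩ b_γ is finite for all δ, γ < ω₁) and there exists an uncountable Γ ⊆ ω₁ such that a_α ∩ b_β = ∅ for all α < β in Γ, then the pre-gap is split: the set c = ⋃_{α∈Γ} a_α satisfies a_α ⊆* c for every α < ω₁ and c ∩ b_γ is finite for every γ < ω₁. -/
/-!
Every proper initial segment of `ω₁` is countable, so an uncountable `Γ ⊆ ω₁` has elements above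
any countable set of indices. Let `c = ⋃_{δ ∈ Γ} a_δ`. Given `α`, some `β ∈ Γ` lies above `α`, and
`a_α ⊆* a_β ⊆ c`. Given `γ`, pick for each `x` in the countable set `c ∩ b_γ` some `δ_x ∈ Γ` with
`x ∈ a_{δ_x}`. Choosing `η ∈ Γ` above `γ` and all the `δ_x`, separation gives
`a_{δ_x} ∩ b_η = ∅`, hence `c ∩ b_γ ⊆ b_γ \ b_η`, which is finite.
-/

noncomputable section

/-- The set of countable ordinals, i.e. ordinals below `ω₁`. -/
abbrev Omega1 : Type 1 := {o : Ordinal // o < (Cardinal.aleph 1).ord}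

/-- `(a_α, b_α)_{α<ω₁}` is a pre-gap. -/
def PreGap (a b : Omega1 → Set ℕ) : Prop :=
  (∀ α, (a α).Infinite) ∧ (∀ α, (b α).Infinite) ∧
  (∀ α, a α ∩ b α = ∅) ∧
  (∀ α β : Omega1, α < β → (a α \ a β).Finite ∧ (b α \ b β).Finite) ∧
  (∀ δ γ : Omega1, (a δ ∩ b γ).Finite)

/-- `c` splits (fills) the pre-gap: `a_α ⊆* c` and `b_α ∩ c` finite for all `α`. -/
def Splits (c : Set ℕ) (a b : Omega1 → Set ℕ) : Prop :=
  c.Infinite ∧ ∀ α, (a α \ c).Finite ∧ (b α ∩ c).Finite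

/-- A gap is a pre-gap which no infinite `c` splits. -/
def IsGap (a b : Omega1 → Set ℕ) : Prop :=
  PreGap a b ∧ ¬ ∃ c : Set ℕ, Splits c a b

open Set

theorem Omega1.countable_Iio (α : Omega1) : (Iio α).Countable := by
  have hcard : α.val.card ≤ Cardinal.aleph0 :=
    Cardinal.lt_aleph_one_iff.mp (Cardinal.lt_ord.mp α.2)
  have hIio : (Iio α.val).Countable := by
    rw [← Cardinal.le_aleph0_iff_set_countable, Cardinal.mk_Iio_ordinal]
    exact Cardinal.lift_le_aleph0.mpr hcard
  exact (hIio.preimage_of_injOn Subtype.val_injective.injOn).mono fun _ h => h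

section

variable {ι : Type*} [LinearOrder ι]

theorem exists_mem_forall_lt_of_not_countable (hIio : ∀ i : ι, (Iio i).Countable)
    {Γ S : Set ι} (hΓ : ¬ Γ.Countable) (hS : S.Countable) : ∃ η ∈ Γ, ∀ s ∈ S, s < η := by
  have hB : (⋃ s ∈ S, Iic s).Countable :=
    hS.biUnion fun s _ => by simpa [← Iio_insert] using hIio s
  obtain ⟨η, hηΓ, hη⟩ := not_subset.mp fun h => hΓ (hB.mono h)
  exact ⟨η, hηΓ, fun s hs => not_le.mp fun h => hη (mem_biUnion hs h)⟩

theorem biUnion_inter_finite_of_separated {X : Type*} [Countable X]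
    (hIio : ∀ i : ι, (Iio i).Countable) {a b : ι → Set X}
    (hb : ∀ α β, α < β → (b α \ b β).Finite) {Γ : Set ι} (hΓ : ¬ Γ.Countable)
    (hsep : ∀ α ∈ Γ, ∀ β ∈ Γ, α < β → a α ∩ b β = ∅) (γ : ι) :
    ((⋃ δ ∈ Γ, a δ) ∩ b γ).Finite := by
  choose δ hδΓ hδa using fun x : ↥(⋃ δ ∈ Γ, a δ) => mem_iUnion₂.mp x.2
  obtain ⟨η, hηΓ, hη⟩ :=
    exists_mem_forall_lt_of_not_countable hIio hΓ (Countable.insert γ (countable_range δ))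
  refine (hb γ η (hη γ (mem_insert _ _))).subset fun x hx => ⟨hx.2, fun hxη => ?_⟩
  have hδη := hη _ (mem_insert_of_mem _ (mem_range_self ⟨x, hx.1⟩))
  exact (hsep _ (hδΓ _) η hηΓ hδη).subset ⟨hδa _, hxη⟩

end

/-- If a pre-gap admits an uncountable `Γ` with `a_α ∩ b_β = ∅` for `α < β` in `Γ`,
then `c = ⋃_{α∈Γ} a_α` splits it. -/
theorem stmt0 (a b : Omega1 → Set ℕ) (hpre : PreGap a b)
    (Γ : Set Omega1) (hΓ : ¬ Γ.Countable)
    (hsep : ∀ α ∈ Γ, ∀ β ∈ Γ, α < β → a α ∩ b β = ∅) :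
    (∀ α : Omega1, (a α \ ⋃ γ ∈ Γ, a γ).Finite) ∧
    (∀ γ : Omega1, ((⋃ δ ∈ Γ, a δ) ∩ b γ).Finite) := by
  obtain ⟨-, -, -, hmono, -⟩ := hpre
  refine ⟨fun α => ?_, biUnion_inter_finite_of_separated Omega1.countable_Iio
    (fun α β h => (hmono α β h).2) hΓ hsep⟩
  obtain ⟨β, hβΓ, hαβ⟩ :=
    exists_mem_forall_lt_of_not_countable Omega1.countable_Iio hΓ (countable_singleton α)
  exact (hmono α β (hαβ α rfl)).1.subset (sdiff_subset_sdiff_right (subset_biUnion_of_mem hβΓ))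
end
end

section
/- If (a_α, b_α)_{α<ω₁} is a pre-gap that is split by some infinite c ⊆ ω (i.e., a_α ⊆* c and b_α ∩ c finite for all α), then there exists an uncountable Γ ⊆ ω₁ such that a_α ∩ b_β = ∅ for all α < β in Γ. -/
/-!
Each `a_α \ c` and `b_α ∩ c` is finite, so `α` has a finite exceptional set
`s_α = (a_α \ c) ∪ (b_α ∩ c)` and a finite trace `a_α ∩ s_α`. There are only countably many
pairs of finite sets, so uncountably many `α` share the same pair `(s, t)` of exceptional set and trace. For two such indices
a point of `a_α ∩ b_β` lies in `s` (in `b_β ∩ c` if it is in `c`, in `a_α \ c` otherwise), hence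
in `a_α ∩ s = a_β ∩ s`, contradicting `a_β ∩ b_β = ∅`.
-/

noncomputable section

open Cardinal Set

instance Omega1.uncountable : Uncountable Omega1 := by
  rw [← aleph0_lt_mk_iff]
  have hmk : #Omega1 = lift.{1, 0} (aleph 1) := by
    rw [← card_ord (aleph 1)]
    exact Cardinal.mk_Iio_ordinal _
  simp [hmk]

theorem Set.Countable.exists_not_countable_fiber {ι β : Type*} [Uncountable ι] {f : ι → β}
    (hf : (range f).Countable) : ∃ y, ¬ (f ⁻¹' {y}).Countable := by
  by_contra! h
  refine not_countable_univ ((hf.biUnion fun y _ ↦ h y).mono ?_)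
  exact fun i _ ↦ mem_biUnion (mem_range_self i) rfl

theorem Set.inter_eq_empty_of_inter_eq_inter {α : Type*} {a a' b c s : Set α}
    (ha : a \ c ⊆ s) (hb : b ∩ c ⊆ s) (has : a ∩ s = a' ∩ s) (hdisj : a' ∩ b = ∅) :
    a ∩ b = ∅ := by
  refine eq_empty_of_forall_notMem fun x ⟨hxa, hxb⟩ ↦ ?_
  have hxs : x ∈ s := by
    by_cases hxc : x ∈ c
    · exact hb ⟨hxb, hxc⟩
    · exact ha ⟨hxa, hxc⟩
  have hxa' : x ∈ a' ∩ s := has ▸ ⟨hxa, hxs⟩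
  exact hdisj.subset ⟨hxa'.1, hxb⟩

/-- If a pre-gap is split by some infinite `c`, then there is an uncountable `Γ`
with `a_α ∩ b_β = ∅` for all `α < β` in `Γ`. -/
theorem stmt1 (a b : Omega1 → Set ℕ) (hpre : PreGap a b)
    (c : Set ℕ) (hc : Splits c a b) :
    ∃ Γ : Set Omega1, ¬ Γ.Countable ∧
      ∀ α ∈ Γ, ∀ β ∈ Γ, α < β → a α ∩ b β = ∅ := by
  obtain ⟨-, -, hdisj, -, -⟩ := hpre
  obtain ⟨-, hsplit⟩ := hc
  let s α := (a α \ c) ∪ (b α ∩ c)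
  let trace α := (s α, a α ∩ s α)
  have htrace : (range trace).Countable := by
    refine (Countable.ofPred_finite.prod Countable.ofPred_finite).mono ?_
    rintro _ ⟨α, rfl⟩
    have hs : (s α).Finite := (hsplit α).1.union (hsplit α).2
    exact ⟨hs, hs.inter_of_right _⟩
  obtain ⟨⟨t, u⟩, hΓ⟩ := htrace.exists_not_countable_fiber
  refine ⟨trace ⁻¹' {(t, u)}, hΓ, fun α hα β hβ _ ↦ ?_⟩
  simp only [mem_preimage, mem_singleton_iff, Prod.mk.injEq, trace] at hα hβ
  obtain ⟨rfl, rfl⟩ := hα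
  obtain ⟨hsβ, haβ⟩ := hβ
  rw [hsβ] at haβ
  exact inter_eq_empty_of_inter_eq_inter (c := c) subset_union_left
    (subset_union_right.trans_eq hsβ) haβ.symm (hdisj β)
end
end

section
/- Assume there exists a 3-capturing construction scheme ℱ on ω₁, and assume functions (h_α)_{α<ω₁} with h_α: α → {0,1} are constructed so that whenever F ∈ ℱ captures α₀ < α₁ < α₂ (with α_i ∈ F_i \ R(F) and α_j = φ_j(α₀)), one has h_{α₁}(α₀) = 1 and h_{α₂}(α₀) = 0 and h_{α₀} ⊆ h_{α₁}. Then the tree S = {h_α ↾ δ : δ ≤ α < ω₁} ordered by extension has no uncountable antichains and no uncountable chains, i.e., S is a Suslin tree. -/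
noncomputable section

/-- `(D_i)_{i<N}` is an increasing Δ-system with root `R`. -/
def IncDeltaSystem {N : ℕ} (D : Fin N → Finset Omega1) (R : Finset Omega1) : Prop :=
  (∀ i, R ⊆ D i) ∧
  (∀ i j, i ≠ j → D i ∩ D j = R) ∧
  (∀ i j : Fin N, i < j →
    (∀ x ∈ R, ∀ y ∈ D i \ R, x < y) ∧
    (∀ x ∈ D i \ R, ∀ y ∈ D j \ R, x < y))

/-- A construction scheme of type `(m_k, n_k, r_k)_{k<ω}` on `ω₁`. -/
structure ConstructionScheme (m n r : ℕ → ℕ) where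
  mem : Set (Finset Omega1)
  cofinal : ∀ A : Finset Omega1, ∃ F ∈ mem, A ⊆ F
  rk : Finset Omega1 → ℕ
  root : Finset Omega1 → Finset Omega1
  card_eq : ∀ F ∈ mem, 0 < rk F → F.card = m (rk F)
  root_card : ∀ F ∈ mem, 0 < rk F → (root F).card = r (rk F)
  decomp : ∀ F ∈ mem, 0 < rk F →
    ∃! D : Fin (n (rk F)) → Finset Omega1,
      (∀ i, D i ∈ mem ∧ rk (D i) = rk F - 1) ∧
      (∀ x, x ∈ F ↔ ∃ i, x ∈ D i) ∧
      IncDeltaSystem D (root F)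

/-- `D` is the canonical decomposition of `F`. -/
def CanonDecomp {m n r : ℕ → ℕ} (S : ConstructionScheme m n r) (F : Finset Omega1)
    (D : Fin (n (S.rk F)) → Finset Omega1) : Prop :=
  (∀ i, D i ∈ S.mem ∧ S.rk (D i) = S.rk F - 1) ∧
  (∀ x, x ∈ F ↔ ∃ i, x ∈ D i) ∧
  IncDeltaSystem D (S.root F)

/-- `y` is the image of `x` under the unique order-preserving bijection `E → F`
(for `E, F` of the same cardinality). -/
def OrdMap (E F : Finset Omega1) (x y : Omega1) : Prop :=
  x ∈ E ∧ y ∈ F ∧ (E.filter (fun z => z < x)).card = (F.filter (fun z => z < y)).card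

/-- The construction scheme `S` is `p`-capturing. -/
def Capturing {m n r : ℕ → ℕ} (S : ConstructionScheme m n r) (p : ℕ) : Prop :=
  ∀ (s : Omega1 → Finset Omega1) (t : Finset Omega1),
    Function.Injective s →
    (∀ ξ η : Omega1, ξ ≠ η → s ξ ∩ s η = t) →
    (∀ ξ η : Omega1, ξ < η →
      (∀ x ∈ t, ∀ y ∈ s ξ \ t, x < y) ∧
      (∀ x ∈ s ξ \ t, ∀ y ∈ s η \ t, x < y)) →
    ∃ (ξ : Fin p → Omega1) (F : Finset Omega1),
      StrictMono ξ ∧ F ∈ S.mem ∧ 0 < S.rk F ∧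
      ∃ D : Fin (n (S.rk F)) → Finset Omega1, CanonDecomp S F D ∧
        t ⊆ S.root F ∧
        ∃ hp : p ≤ n (S.rk F), ∀ i : Fin p,
          s (ξ i) \ t ⊆ D (Fin.castLE hp i) \ S.root F ∧
          ∀ y : Omega1, y ∈ s (ξ i) \ t ↔
            ∃ x ∈ s (ξ ⟨0, i.pos⟩) \ t,
              OrdMap (D (Fin.castLE hp ⟨0, i.pos⟩)) (D (Fin.castLE hp i)) x y

/-- An element of `2^{<ω₁}`: a binary function with domain an ordinal `δ < ω₁`
(represented as a total function vanishing at and above `dom`). -/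
structure BSeq : Type 1 where
  dom : Omega1
  val : Omega1 → Bool
  zero_outside : ∀ x : Omega1, ¬ x < dom → val x = false

/-- `g` extends `f` in `2^{<ω₁}`. -/
def BSeq.Ext (f g : BSeq) : Prop :=
  f.dom ≤ g.dom ∧ ∀ x : Omega1, x < f.dom → g.val x = f.val x

/-- The restriction of `g` to the ordinal `δ`. -/
def BSeq.restrict (g : BSeq) (δ : Omega1) : BSeq :=
  ⟨δ, fun x => if x < δ then g.val x else false, by intro x hx; simp [if_neg hx]⟩


/-! Every node of the tree is an initial segment of some `h_α`. From an uncountable antichain or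
chain, transfinite recursion extracts an `ω₁`-sequence of nodes whose witnesses `α` increase
strictly, and 3-capturing applied to the singletons of these witnesses yields a captured triple
`α₀ < α₁ < α₂`. In an antichain this is impossible because `h_{α₁}` extends `h_{α₀}`, so the
nodes below `α₀` and `α₁` are comparable. In a chain the recursion also keeps every later domain
above the earlier witnesses, so the nodes below `α₁` and `α₂` are both defined at `α₀`, where
they take the different values `h_{α₁}(α₀) = 1` and `h_{α₂}(α₀) = 0`. -/

open Set

namespace Omega1

instance : Nonempty Omega1 :=
  ⟨⟨0, (Cardinal.isSuccLimit_ord (Cardinal.aleph0_le_aleph 1)).pos⟩⟩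

lemma countable_Iio_s9 (β : Omega1) : (Iio β).Countable := by
  have hβ : (Iio β.1).Countable := by
    rw [← Cardinal.le_aleph0_iff_set_countable, Cardinal.mk_Iio_ordinal, Cardinal.lift_le_aleph0,
      ← Cardinal.lt_aleph_one_iff]
    exact Cardinal.lt_ord.mp β.2
  exact hβ.preimage Subtype.val_injective

lemma exists_forall_lt_of_countable {T : Set Omega1} (hT : T.Countable) :
    ∃ β : Omega1, ∀ x ∈ T, x < β := by
  have : Countable T := hT.to_subtype
  have hsucc : ∀ x : T, Order.succ x.1.1 < (Cardinal.aleph 1).ord := fun x =>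
    (Cardinal.isSuccLimit_ord (Cardinal.aleph0_le_aleph 1)).succ_lt x.1.2
  refine ⟨⟨⨆ x : T, Order.succ x.1.1, ?_⟩, fun x hx => ?_⟩
  · simp only [Cardinal.ord_aleph] at hsucc ⊢
    exact Ordinal.iSup_lt_omega_one hsucc
  · exact (Order.lt_succ x.1).trans_le
      (Ordinal.le_iSup (fun x : T => Order.succ x.1.1) ⟨x, hx⟩)

lemma exists_lt_of_injOn {ι : Type*} {B : Set ι} (hB : ¬ B.Countable) {p : ι → Omega1}
    (hp : InjOn p B) (β : Omega1) : ∃ x ∈ B, β < p x := by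
  by_contra! hle
  have hmaps : MapsTo p B (Iic β) := hle
  exact hB (hmaps.countable_of_injOn hp (Iio_insert (a := β) ▸ (countable_Iio_s9 β).insert β))

lemma exists_seq_mem_of_unbounded {ι : Type*} {B : Set ι} (p u : ι → Omega1)
    (hB : ∀ β, ∃ x ∈ B, β < p x) :
    ∃ e : Omega1 → ι, (∀ ξ, e ξ ∈ B) ∧ ∀ η ξ, η < ξ → u (e η) < p (e ξ) := by
  have step : ∀ (ξ : Omega1) (e : ∀ η, η < ξ → ι),
      ∃ x ∈ B, ∀ η (hη : η < ξ), u (e η hη) < p x := by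
    intro ξ e
    have : Countable (Iio ξ) := (countable_Iio_s9 ξ).to_subtype
    obtain ⟨β, hβ⟩ := exists_forall_lt_of_countable
      (countable_range fun η : Iio ξ => u (e η η.2))
    obtain ⟨x, hxB, hβx⟩ := hB β
    exact ⟨x, hxB, fun η hη => (hβ _ ⟨⟨η, hη⟩, rfl⟩).trans hβx⟩
  choose next hnextB hnext using step
  have wf : WellFounded ((· < ·) : Omega1 → Omega1 → Prop) := wellFounded_lt
  refine ⟨wf.fix next, fun ξ => wf.fix_eq next ξ ▸ hnextB ξ _, fun η ξ hηξ => ?_⟩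
  rw [wf.fix_eq next ξ]
  exact hnext ξ _ η hηξ

end Omega1

lemma Capturing.exists_capture_of_strictMono {m n r : ℕ → ℕ} {S : ConstructionScheme m n r}
    {p : ℕ} (hcap : Capturing S p)
    {a : Omega1 → Omega1} (ha : StrictMono a) :
    ∃ (ξ : Fin p → Omega1) (F : Finset Omega1), StrictMono ξ ∧ F ∈ S.mem ∧ 0 < S.rk F ∧
      ∃ D : Fin (n (S.rk F)) → Finset Omega1, CanonDecomp S F D ∧
        ∃ hp : p ≤ n (S.rk F), ∀ i : Fin p,
          a (ξ i) ∈ D (Fin.castLE hp i) \ S.root F ∧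
          OrdMap (D (Fin.castLE hp ⟨0, i.pos⟩)) (D (Fin.castLE hp i))
            (a (ξ ⟨0, i.pos⟩)) (a (ξ i)) := by
  obtain ⟨ξ, F, hξ, hF, hrk, D, hD, -, hp, hcapt⟩ := hcap (fun ξ => {a ξ}) ∅
    (fun _ _ hxy => ha.injective (Finset.singleton_injective hxy))
    (fun _ _ hne => Finset.singleton_inter_of_notMem
      (Finset.notMem_singleton.mpr (ha.injective.ne hne)))
    (fun _ _ hlt => ⟨by simp, by simpa using ha hlt⟩)
  refine ⟨ξ, F, hξ, hF, hrk, D, hD, hp, fun i => ⟨(hcapt i).1 (by simp), ?_⟩⟩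
  obtain ⟨x, hx, hmap⟩ := ((hcapt i).2 (a (ξ i))).mp (by simp)
  rw [Finset.sdiff_empty, Finset.mem_singleton] at hx
  subst hx
  exact hmap

def HasCapturedTriples (h : Omega1 → Omega1 → Bool) : Prop :=
  ∀ a : Omega1 → Omega1, StrictMono a → ∃ ξ₀ ξ₁ ξ₂ : Omega1, ξ₀ < ξ₁ ∧ ξ₁ < ξ₂ ∧
    h (a ξ₁) (a ξ₀) = true ∧ h (a ξ₂) (a ξ₀) = false ∧
    ∀ x : Omega1, x < a ξ₀ → h (a ξ₁) x = h (a ξ₀) x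

lemma Capturing.hasCapturedTriples {m n r : ℕ → ℕ} {S : ConstructionScheme m n r}
    (hcap : Capturing S 3) {h : Omega1 → Omega1 → Bool}
    (hH : ∀ F ∈ S.mem, 0 < S.rk F →
      ∀ D : Fin (n (S.rk F)) → Finset Omega1, CanonDecomp S F D →
        ∀ h3 : 3 ≤ n (S.rk F), ∀ α : Fin 3 → Omega1, StrictMono α →
          (∀ i : Fin 3, α i ∈ D (Fin.castLE h3 i) \ S.root F) →
          (∀ i : Fin 3,
            OrdMap (D (Fin.castLE h3 ⟨0, Nat.zero_lt_succ 2⟩)) (D (Fin.castLE h3 i))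
              (α ⟨0, Nat.zero_lt_succ 2⟩) (α i)) →
          h (α 1) (α 0) = true ∧ h (α 2) (α 0) = false ∧
            ∀ x : Omega1, x < α 0 → h (α 1) x = h (α 0) x) :
    HasCapturedTriples h := by
  intro a ha
  obtain ⟨ξ, F, hξ, hF, hrk, D, hD, hp, hcapt⟩ := hcap.exists_capture_of_strictMono ha
  obtain ⟨hone, hzero, hcoh⟩ := hH F hF hrk D hD hp (a ∘ ξ) (ha.comp hξ)
    (fun i => (hcapt i).1) (fun i => (hcapt i).2)
  exact ⟨ξ 0, ξ 1, ξ 2, hξ (by decide), hξ (by decide), hone, hzero, hcoh⟩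

namespace BSeq

lemma ext_or_ext_of_val_eq {f g : BSeq}
    (hfg : ∀ x : Omega1, x < f.dom → x < g.dom → f.val x = g.val x) : f.Ext g ∨ g.Ext f := by
  rcases le_total f.dom g.dom with hle | hle
  · exact Or.inl ⟨hle, fun x hx => (hfg x hx (hx.trans_le hle)).symm⟩
  · exact Or.inr ⟨hle, fun x hx => hfg x (hx.trans_le hle) hx⟩

lemma val_eq_of_ext_or_ext {f g : BSeq} (hfg : f.Ext g ∨ g.Ext f) {x : Omega1}
    (hf : x < f.dom) (hg : x < g.dom) : f.val x = g.val x := by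
  rcases hfg with hfg | hgf
  · exact (hfg.2 x hf).symm
  · exact hgf.2 x hg

lemma Ext.eq_of_dom_le {f g : BSeq} (hfg : f.Ext g) (hdom : g.dom ≤ f.dom) : f = g := by
  obtain ⟨d, v, hv⟩ := f
  obtain ⟨d', v', hv'⟩ := g
  obtain rfl : d = d' := le_antisymm hfg.1 hdom
  obtain rfl : v = v' := funext fun x => by
    by_cases hx : x < d
    · exact (hfg.2 x hx).symm
    · rw [hv x hx, hv' x hx]
  rfl

end BSeq

def restrictionTree (h : Omega1 → Omega1 → Bool) : Set BSeq :=
  {f | ∃ α : Omega1, f.dom ≤ α ∧ ∀ x : Omega1, x < f.dom → f.val x = h α x}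

section SuslinTree

variable {h : Omega1 → Omega1 → Bool}

theorem countable_of_antichain (hh : HasCapturedTriples h) {A : Set BSeq}
    (hA : A ⊆ restrictionTree h)
    (hanti : ∀ f ∈ A, ∀ g ∈ A, f ≠ g → ¬ (f.Ext g ∨ g.Ext f)) : A.Countable := by
  by_contra hunc
  choose! w hw_dom hw_val using fun f (hf : f ∈ A) => hA hf
  have eq_of_agree : ∀ f ∈ A, ∀ g ∈ A,
      (∀ x : Omega1, x < f.dom → h (w f) x = h (w g) x) → f = g := by
    refine fun f hf g hg hfg => by_contra fun hne => hanti f hf g hg hne ?_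
    refine BSeq.ext_or_ext_of_val_eq fun x hxf hxg => ?_
    rw [hw_val f hf x hxf, hw_val g hg x hxg, hfg x hxf]
  have hinj : InjOn w A := fun f hf g hg hfg => eq_of_agree f hf g hg fun x _ => by rw [hfg]
  obtain ⟨e, heA, he⟩ :=
    Omega1.exists_seq_mem_of_unbounded w w (Omega1.exists_lt_of_injOn hunc hinj)
  obtain ⟨ξ₀, ξ₁, -, h01, -, -, -, hcoh⟩ := hh (w ∘ e) fun η ξ hηξ => he η ξ hηξ
  have heq : e ξ₀ = e ξ₁ := eq_of_agree _ (heA ξ₀) _ (heA ξ₁) fun x hx =>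
    (hcoh x (hx.trans_le (hw_dom _ (heA ξ₀)))).symm
  exact (he ξ₀ ξ₁ h01).ne (congrArg w heq)

theorem countable_of_chain (hh : HasCapturedTriples h) {C : Set BSeq}
    (hC : C ⊆ restrictionTree h)
    (hchain : ∀ f ∈ C, ∀ g ∈ C, f.Ext g ∨ g.Ext f) : C.Countable := by
  by_contra hunc
  choose! w hw_dom hw_val using fun f (hf : f ∈ C) => hC hf
  have hinj : InjOn BSeq.dom C := fun f hf g hg hfg =>
    (hchain f hf g hg).elim (·.eq_of_dom_le hfg.ge) fun hgf =>
      (hgf.eq_of_dom_le hfg.le).symm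
  obtain ⟨e, heC, he⟩ :=
    Omega1.exists_seq_mem_of_unbounded BSeq.dom w (Omega1.exists_lt_of_injOn hunc hinj)
  have hmono : StrictMono (w ∘ e) := fun η ξ hηξ => (he η ξ hηξ).trans_le (hw_dom _ (heC ξ))
  obtain ⟨ξ₀, ξ₁, ξ₂, h01, h12, hone, hzero, -⟩ := hh _ hmono
  have hlt₁ := he ξ₀ ξ₁ h01
  have hlt₂ := he ξ₀ ξ₂ (h01.trans h12)
  have hval := BSeq.val_eq_of_ext_or_ext (hchain _ (heC ξ₁) _ (heC ξ₂)) hlt₁ hlt₂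
  rw [hw_val _ (heC ξ₁) _ hlt₁, hw_val _ (heC ξ₂) _ hlt₂] at hval
  exact Bool.noConfusion (hone.symm.trans (hval.trans hzero))

end SuslinTree

/-- Given a 3-capturing construction scheme and functions `h_α : α → 2` coherent with
capturing as in the paper's construction, the tree `S = {h_α ↾ δ : δ ≤ α < ω₁}` has no
uncountable antichains and no uncountable chains, i.e. it is a Suslin tree. -/
theorem stmt9 (m n r : ℕ → ℕ) (S : ConstructionScheme m n r)
    (hcap : Capturing S 3)
    (h : Omega1 → Omega1 → Bool)
    (hH : ∀ F ∈ S.mem, 0 < S.rk F →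
      ∀ D : Fin (n (S.rk F)) → Finset Omega1, CanonDecomp S F D →
        ∀ h3 : 3 ≤ n (S.rk F), ∀ α : Fin 3 → Omega1, StrictMono α →
          (∀ i : Fin 3, α i ∈ D (Fin.castLE h3 i) \ S.root F) →
          (∀ i : Fin 3,
            OrdMap (D (Fin.castLE h3 ⟨0, by omega⟩)) (D (Fin.castLE h3 i))
              (α ⟨0, by omega⟩) (α i)) →
          h (α 1) (α 0) = true ∧ h (α 2) (α 0) = false ∧
            ∀ x : Omega1, x < α 0 → h (α 1) x = h (α 0) x) :
    (∀ A ⊆ {f : BSeq | ∃ α : Omega1, f.dom ≤ α ∧ ∀ x : Omega1, x < f.dom → f.val x = h α x},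
      (∀ f ∈ A, ∀ g ∈ A, f ≠ g → ¬ (BSeq.Ext f g ∨ BSeq.Ext g f)) → A.Countable) ∧
    (∀ C ⊆ {f : BSeq | ∃ α : Omega1, f.dom ≤ α ∧ ∀ x : Omega1, x < f.dom → f.val x = h α x},
      (∀ f ∈ C, ∀ g ∈ C, BSeq.Ext f g ∨ BSeq.Ext g f) → C.Countable) := by
  have hh := hcap.hasCapturedTriples hH
  exact ⟨fun _ hA hanti => countable_of_antichain hh hA hanti,
    fun _ hC hchain => countable_of_chain hh hC hchain⟩
end
end

section
/- Suppose (a_α, b_α)_{α<ω₁} is a pre-gap of infinite subsets of ω and for every uncountable Γ ⊆ ω₁ there exist ordinals α₀ < α₁ < α₂ in Γ such that a_{α₀} ∩ b_{α₁} ≠ ∅ while a_{α₀} ⊆ a_{α₂} and b_{α₀} ⊆ b_{α₂}. Then (a_α, b_α)_{α<ω₁} is a gap and moreover a T-gap. -/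
noncomputable section

lemma omega1_uncountable : ¬ (Set.univ : Set Omega1).Countable := by
  rw [Set.countable_univ_iff]
  intro h
  have h1 : Cardinal.mk Omega1 ≤ Cardinal.aleph0.{1} := Cardinal.mk_le_aleph0
  have h2 : Cardinal.mk (Set.Iio (Cardinal.aleph 1).ord) = Cardinal.lift.{1,0} (Cardinal.aleph 1) := by
    rw [Ordinal.mk_Iio_ordinal.{0}, Cardinal.card_ord]
  rw [show (Omega1 : Type 1) = ↥(Set.Iio (Cardinal.aleph 1).ord) from rfl] at h1
  rw [h2] at h1
  have := Cardinal.aleph0_lt_aleph_one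
  rw [← Cardinal.lift_aleph0.{1,0}, Cardinal.lift_le] at h1
  exact absurd h1 (not_le.mpr this)

/-- If a pre-gap is such that every uncountable `Γ ⊆ ω₁` contains `α₀ < α₁ < α₂` with
`a_{α₀} ∩ b_{α₁} ≠ ∅`, `a_{α₀} ⊆ a_{α₂}` and `b_{α₀} ⊆ b_{α₂}`, then it is a gap and
moreover a T-gap. -/
theorem stmt10 (a b : Omega1 → Set ℕ) (hpre : PreGap a b)
    (hyp : ∀ Γ : Set Omega1, ¬ Γ.Countable →
      ∃ α₀ ∈ Γ, ∃ α₁ ∈ Γ, ∃ α₂ ∈ Γ, α₀ < α₁ ∧ α₁ < α₂ ∧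
        a α₀ ∩ b α₁ ≠ ∅ ∧ a α₀ ⊆ a α₂ ∧ b α₀ ⊆ b α₂) :
    IsGap a b ∧
    ∀ Γ : Set Omega1, ¬ Γ.Countable →
      ∃ α ∈ Γ, ∃ β ∈ Γ, α < β ∧ a α ⊆ a β ∧ b α ⊆ b β := by
  have hdisj := hpre.2.2.1
  refine ⟨⟨hpre, ?_⟩, fun Γ hΓ => ?_⟩
  · rintro ⟨c, hci, hc⟩
    -- for each α choose a bound n α
    have hn : ∀ α : Omega1, ∃ m : ℕ, (a α \ c) ⊆ Set.Iio m ∧ (b α ∩ c) ⊆ Set.Iio m := by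
      intro α
      obtain ⟨h1, h2⟩ := hc α
      obtain ⟨N1, hN1⟩ := h1.bddAbove
      obtain ⟨N2, hN2⟩ := h2.bddAbove
      exact ⟨max N1 N2 + 1,
        fun x hx => Nat.lt_succ_of_le ((hN1 hx).trans (le_max_left _ _)),
        fun x hx => Nat.lt_succ_of_le ((hN2 hx).trans (le_max_right _ _))⟩
    choose n hna hnb using hn
    have hfa : ∀ α : Omega1, (a α ∩ Set.Iio (n α)).Finite :=
      fun α => (Set.finite_Iio _).subset Set.inter_subset_right
    have hfb : ∀ α : Omega1, (b α ∩ Set.Iio (n α)).Finite :=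
      fun α => (Set.finite_Iio _).subset Set.inter_subset_right
    set g : Omega1 → ℕ × Finset ℕ × Finset ℕ :=
      fun α => (n α, (hfa α).toFinset, (hfb α).toFinset) with hg
    have : ∃ y, ¬ (g ⁻¹' {y}).Countable := by
      by_contra h
      push_neg at h
      apply omega1_uncountable
      have huniv : (Set.univ : Set Omega1) = ⋃ y, g ⁻¹' {y} := by
        ext α; simp
      rw [huniv]
      exact Set.countable_iUnion h
    obtain ⟨⟨N, s, t⟩, hy⟩ := this
    obtain ⟨α₀, h0, α₁, h1, α₂, -, h01, -, hne, -, -⟩ := hyp _ hy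
    simp only [Set.mem_preimage, Set.mem_singleton_iff, hg, Prod.mk.injEq] at h0 h1
    obtain ⟨hn0, hs0, ht0⟩ := h0
    obtain ⟨hn1, hs1, ht1⟩ := h1
    obtain ⟨x, hxa, hxb⟩ := Set.nonempty_iff_ne_empty.mpr hne
    by_cases hx : x < N
    · -- x ∈ s and x ∈ t, so x ∈ a α₀ ∩ b α₀
      have hxs : x ∈ (hfa α₀).toFinset := by
        rw [Set.Finite.mem_toFinset]; exact ⟨hxa, by rw [hn0]; exact hx⟩
      have hxt : x ∈ (hfb α₁).toFinset := by
        rw [Set.Finite.mem_toFinset]; exact ⟨hxb, by rw [hn1]; exact hx⟩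
      rw [hs0] at hxs
      rw [ht1, ← ht0] at hxt
      rw [Set.Finite.mem_toFinset] at hxt
      have : x ∈ a α₀ ∩ b α₀ := ⟨hxa, hxt.1⟩
      rw [hdisj α₀] at this
      exact this
    · -- x ≥ N, so x ∈ c, but then x ∈ b α₁ ∩ c ⊆ Iio N
      have hxc : x ∈ c := by
        by_contra hxc
        exact hx (by have := hna α₀ ⟨hxa, hxc⟩; rwa [Set.mem_Iio, hn0] at this)
      have := hnb α₁ ⟨hxb, hxc⟩
      rw [Set.mem_Iio, hn1] at this
      exact hx this
  · obtain ⟨α₀, h0, α₁, h1, α₂, h2, h01, h12, -, ha, hb⟩ := hyp Γ hΓ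
    exact ⟨α₀, h0, α₂, h2, h01.trans h12, ha, hb⟩
end
end

section
/- Let (a_α, b_α)_{α<ω₁} be a pre-gap. If there exist n < ω, sets s, t ⊆ n with s ∩ t = ∅, and an uncountable Γ ⊆ ω₁ such that for all α ∈ Γ: a_α ∩ n = s, b_α ∩ n = t, and for a fixed infinite c ⊆ ω, a_α \ c ⊆ n and b_α ∩ c ⊆ n, then a_α ∩ b_β = ∅ for all α < β in Γ. -/
noncomputable section

/-- If on an uncountable `Γ` the sets of a pre-gap have constant traces `s, t` on `n`
with `s ∩ t = ∅`, and `a_α \ c ⊆ n`, `b_α ∩ c ⊆ n` for a fixed infinite `c`, then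
`a_α ∩ b_β = ∅` for all `α < β` in `Γ`. -/
theorem stmt11 (a b : Omega1 → Set ℕ) (hpre : PreGap a b)
    (nn : ℕ) (s t : Set ℕ) (hs : s ⊆ Set.Iio nn) (ht : t ⊆ Set.Iio nn)
    (hst : s ∩ t = ∅)
    (Γ : Set Omega1) (hΓ : ¬ Γ.Countable)
    (c : Set ℕ) (hc : c.Infinite)
    (hΓprop : ∀ α ∈ Γ, a α ∩ Set.Iio nn = s ∧ b α ∩ Set.Iio nn = t ∧
      a α \ c ⊆ Set.Iio nn ∧ b α ∩ c ⊆ Set.Iio nn) :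
    ∀ α ∈ Γ, ∀ β ∈ Γ, α < β → a α ∩ b β = ∅ := by
  intro α hα β hβ _
  obtain ⟨hsa, -, hac, -⟩ := hΓprop α hα
  obtain ⟨-, htb, -, hbc⟩ := hΓprop β hβ
  ext x
  simp only [Set.mem_inter_iff, Set.mem_empty_iff_false, iff_false, not_and]
  intro hxa hxb
  by_cases hx : x < nn
  · have hxs : x ∈ s := hsa ▸ ⟨hxa, hx⟩
    have hxt : x ∈ t := htb ▸ ⟨hxb, hx⟩
    have : x ∈ s ∩ t := ⟨hxs, hxt⟩
    rw [hst] at this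
    exact this
  · by_cases hxc : x ∈ c
    · exact hx (hbc ⟨hxb, hxc⟩)
    · exact hx (hac ⟨hxa, hxc⟩)
end
end
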